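/- The plus order is a partial order on L(H,K): the relation 'A ≤⁺ B iff range(A) ⊆ range(B), range(A*) ⊆ range(B*), and there exist bounded idempotents Q̃ on K and Q on H with A = Q̃ B Q' is reflexive, antisymmetric, and transitive. (In particular, transitivity: if A ≤⁺ B and B ≤⁺ C then A ≤⁺ C.) -/

import Mathlib

/-!
If `A ≤⁺ B` via `A = Q̃ B Q`, then `Q̃ A = A` and `A Q = A`. An operator `T` with `T B = B` also
satisfies `T A = A` whenever `ran A ⊆ ran B`, and dually `B S = B` gives `A S = A` whenever
`ran A* ⊆ ran B*`; this gives antisymmetry at once. For transitivity, `A = Q̃ P̃ C P Q`, but `Q̃ P̃`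
and `P Q` need not be idempotent. Sandwiching by the orthogonal projections `E` onto `cl ran A`
and `F` onto `cl ran A*` repairs this: `Q̃ P̃` fixes `cl ran A`, so `E Q̃ P̃` is idempotent, dually
`P Q F` is, and `A = E A F = (E Q̃ P̃) C (P Q F)`.
-/

open ContinuousLinearMap

variable {H K : Type*} [NormedAddCommGroup H] [InnerProductSpace ℂ H] [CompleteSpace H]
  [NormedAddCommGroup K] [InnerProductSpace ℂ K] [CompleteSpace K]

/-- The plus order on `L(H,K)`. -/
def plusOrder (A B : H →L[ℂ] K) : Prop :=
  LinearMap.range (A : H →ₗ[ℂ] K) ≤ LinearMap.range (B : H →ₗ[ℂ] K) ∧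
  LinearMap.range ((adjoint A : K →L[ℂ] H) : K →ₗ[ℂ] H) ≤
    LinearMap.range ((adjoint B : K →L[ℂ] H) : K →ₗ[ℂ] H) ∧
  ∃ (Qt : K →L[ℂ] K) (Q : H →L[ℂ] H), Qt ∘L Qt = Qt ∧ Q ∘L Q = Q ∧ A = Qt ∘L (B ∘L Q)

theorem IsIdempotentElem.mul_of_mul_eq_right {S : Type*} [Semigroup S] {e u : S}
    (he : IsIdempotentElem e) (hu : u * e = e) : IsIdempotentElem (e * u) := by
  rw [IsIdempotentElem, mul_assoc, ← mul_assoc u, hu, ← mul_assoc, he.eq]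

theorem IsIdempotentElem.mul_of_mul_eq_left {S : Type*} [Semigroup S] {e u : S}
    (he : IsIdempotentElem e) (hu : e * u = e) : IsIdempotentElem (u * e) := by
  rw [IsIdempotentElem, mul_assoc, ← mul_assoc e, hu, he.eq]

namespace ContinuousLinearMap

section Semiring

variable {R M M' N : Type*} [Semiring R] [TopologicalSpace M] [AddCommMonoid M] [Module R M]
  [TopologicalSpace M'] [AddCommMonoid M'] [Module R M'] [TopologicalSpace N] [AddCommMonoid N]
  [Module R N]

theorem comp_eq_self_of_range_le {T : N →L[R] N} {A : M →L[R] N} {B : M' →L[R] N}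
    (hT : T ∘L B = B) (h : LinearMap.range (A : M →ₗ[R] N) ≤ LinearMap.range (B : M' →ₗ[R] N)) :
    T ∘L A = A := by
  ext x
  obtain ⟨y, hy⟩ := h (LinearMap.mem_range_self (A : M →ₗ[R] N) x)
  rw [coe_coe] at hy
  simpa [hy] using congr($hT y)

end Semiring

variable {𝕜 E F : Type*} [RCLike 𝕜] [NormedAddCommGroup E] [InnerProductSpace 𝕜 E]
  [NormedAddCommGroup F] [InnerProductSpace 𝕜 F] [CompleteSpace F]

noncomputable def rangeClosureProj (A : E →L[𝕜] F) : F →L[𝕜] F :=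
  (LinearMap.range (A : E →ₗ[𝕜] F)).topologicalClosure.starProjection

theorem isIdempotentElem_rangeClosureProj (A : E →L[𝕜] F) :
    IsIdempotentElem (rangeClosureProj A) :=
  Submodule.isIdempotentElem_starProjection _

theorem adjoint_rangeClosureProj (A : E →L[𝕜] F) :
    adjoint (rangeClosureProj A) = rangeClosureProj A :=
  (isSelfAdjoint_starProjection _).adjoint_eq

theorem rangeClosureProj_comp_self (A : E →L[𝕜] F) : rangeClosureProj A ∘L A = A := by
  ext x
  exact Submodule.starProjection_eq_self_iff.mpr
    (Submodule.le_topologicalClosure _ (LinearMap.mem_range_self (A : E →ₗ[𝕜] F) x))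

theorem comp_rangeClosureProj_of_comp_eq_self {T : F →L[𝕜] F} {A : E →L[𝕜] F}
    (hT : T ∘L A = A) :
    T ∘L rangeClosureProj A = rangeClosureProj A := by
  have hfix : (LinearMap.range (A : E →ₗ[𝕜] F)).topologicalClosure ≤
      LinearMap.ker ((T - 1 : F →L[𝕜] F) : F →ₗ[𝕜] F) := by
    refine Submodule.topologicalClosure_minimal _ ?_ (isClosed_ker _)
    rintro _ ⟨x, rfl⟩
    simpa [sub_eq_zero] using congr($hT x)
  ext x
  simpa [sub_eq_zero, rangeClosureProj] using hfix (Submodule.starProjection_apply_mem _ x)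

variable [CompleteSpace E]

theorem comp_eq_self_of_adjoint_range_le {S : E →L[𝕜] E} {A B : E →L[𝕜] F}
    (hS : B ∘L S = B)
    (h : LinearMap.range (adjoint A : F →ₗ[𝕜] E) ≤ LinearMap.range (adjoint B : F →ₗ[𝕜] E)) :
    A ∘L S = A := by
  apply adjoint.injective
  rw [adjoint_comp]
  exact comp_eq_self_of_range_le (by rw [← adjoint_comp, hS]) h

theorem comp_rangeClosureProj_adjoint (A : E →L[𝕜] F) :
    A ∘L rangeClosureProj (adjoint A) = A := by
  apply adjoint.injective
  rw [adjoint_comp, adjoint_rangeClosureProj]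
  exact rangeClosureProj_comp_self _

theorem rangeClosureProj_adjoint_comp_of_comp_eq_self {S : E →L[𝕜] E} {A : E →L[𝕜] F}
    (hS : A ∘L S = A) : rangeClosureProj (adjoint A) ∘L S = rangeClosureProj (adjoint A) := by
  apply adjoint.injective
  rw [adjoint_comp, adjoint_rangeClosureProj]
  exact comp_rangeClosureProj_of_comp_eq_self (by rw [← adjoint_comp, hS])

end ContinuousLinearMap

theorem plusOrder_refl (A : H →L[ℂ] K) : plusOrder A A :=
  ⟨le_rfl, le_rfl, .id ℂ K, .id ℂ H, rfl, rfl, rfl⟩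

theorem plusOrder_antisymm {A B : H →L[ℂ] K} (hAB : plusOrder A B) (hBA : plusOrder B A) :
    A = B := by
  obtain ⟨-, -, Qt, Q, hQt, hQ, hA⟩ := hAB
  obtain ⟨hBA_range, hBA_range_adjoint, -⟩ := hBA
  have hQtB : Qt ∘L B = B :=
    comp_eq_self_of_range_le (by rw [hA, ← comp_assoc, hQt]) hBA_range
  have hBQ : B ∘L Q = B :=
    comp_eq_self_of_adjoint_range_le (by rw [hA, comp_assoc, comp_assoc, hQ]) hBA_range_adjoint
  rw [hA, hBQ, hQtB]

theorem plusOrder_trans {A B C : H →L[ℂ] K} (hAB : plusOrder A B) (hBC : plusOrder B C) :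
    plusOrder A C := by
  obtain ⟨hAB_range, hAB_range_adjoint, Qt, Q, hQt, hQ, hA⟩ := hAB
  obtain ⟨hBC_range, hBC_range_adjoint, Pt, P, hPt, hP, hB⟩ := hBC
  refine ⟨hAB_range.trans hBC_range, hAB_range_adjoint.trans hBC_range_adjoint,
    rangeClosureProj A ∘L (Qt ∘L Pt), (P ∘L Q) ∘L rangeClosureProj (adjoint A), ?_, ?_, ?_⟩
  · have hQtA : Qt ∘L A = A := by rw [hA, ← comp_assoc, hQt]
    have hPtA : Pt ∘L A = A :=
      comp_eq_self_of_range_le (by rw [hB, ← comp_assoc, hPt]) hAB_range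
    exact (isIdempotentElem_rangeClosureProj A).mul_of_mul_eq_right
      (comp_rangeClosureProj_of_comp_eq_self (by rw [comp_assoc, hPtA, hQtA]))
  · have hAQ : A ∘L Q = A := by rw [hA, comp_assoc, comp_assoc, hQ]
    have hAP : A ∘L P = A :=
      comp_eq_self_of_adjoint_range_le (by rw [hB, comp_assoc, comp_assoc, hP]) hAB_range_adjoint
    exact (isIdempotentElem_rangeClosureProj (adjoint A)).mul_of_mul_eq_left
      (rangeClosureProj_adjoint_comp_of_comp_eq_self (by rw [← comp_assoc, hAP, hAQ]))
  · calc A = rangeClosureProj A ∘L A ∘L rangeClosureProj (adjoint A) := by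
          rw [comp_rangeClosureProj_adjoint, rangeClosureProj_comp_self]
      _ = _ := by rw [hA, hB]; simp only [comp_assoc]

theorem stmt3 :
    (∀ A : H →L[ℂ] K, plusOrder A A) ∧
    (∀ A B : H →L[ℂ] K, plusOrder A B → plusOrder B A → A = B) ∧
    (∀ A B C : H →L[ℂ] K, plusOrder A B → plusOrder B C → plusOrder A C) :=
  ⟨plusOrder_refl, fun _ _ => plusOrder_antisymm, fun _ _ _ => plusOrder_trans⟩
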